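/- arXiv:1402.0129 — 2 statements merged into one kernel-verified Lean document; each statement's English description precedes it below -/
import Mathlib

section
/- For any density matrix ρ, any d×d unitary matrix U relating two orthonormal bases, the induced probability vectors p and q, and any α > 1, one has H_α(p) + H_α(q) ≥ (2/(1−α)) ln((1 + ∑_{i=1}^d W_i^α)/2), where W = (s₁, s₂−s₁, …, s_d−s_{d−1}). -/
open scoped BigOperators Matrix ComplexConjugate ComplexOrder

/-- Shannon entropy of a finite real vector (natural logarithm). -/
noncomputable def shannonEntropy {n : Type*} [Fintype n] (x : n → ℝ) : ℝ :=
  -∑ i, x i * Real.log (x i)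

/-- Von Neumann entropy of a Hermitian matrix, `-∑ λᵢ ln λᵢ`. -/
noncomputable def vonNeumannEntropy {d : ℕ} {ρ : Matrix (Fin d) (Fin d) ℂ}
    (hρ : ρ.IsHermitian) : ℝ :=
  -∑ i, hρ.eigenvalues i * Real.log (hρ.eigenvalues i)

/-- Rényi entropy of order `α ≠ 1` (natural logarithm). -/
noncomputable def renyiEntropy {n : Type*} [Fintype n] (α : ℝ) (x : n → ℝ) : ℝ :=
  (1 / (1 - α)) * Real.log (∑ i, x i ^ α)

/-- The operator norm (largest singular value) of the submatrix of `U` with rows `I`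
and columns `J`, expressed as the supremum of `|⟨x, U y⟩|` over unit vectors supported
on `I` resp. `J`. -/
noncomputable def subOpNorm {d : ℕ} (U : Matrix (Fin d) (Fin d) ℂ)
    (I J : Finset (Fin d)) : ℝ :=
  sSup { r : ℝ | ∃ (x : I → ℂ) (y : J → ℂ),
    (∑ i, ‖x i‖ ^ 2 = 1) ∧ (∑ j, ‖y j‖ ^ 2 = 1) ∧
    r = ‖∑ i : I, ∑ j : J, (starRingEnd ℂ) (x i) * U i.1 j.1 * y j‖ }

/-- `sCoef U k` is the coefficient `s_k`: the maximal operator norm of a submatrix of `U`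
of class `k`, i.e. with `#rows + #cols = k + 1` (for `k = 0` the set is empty and the
supremum equals `0`). -/
noncomputable def sCoef {d : ℕ} (U : Matrix (Fin d) (Fin d) ℂ) (k : ℕ) : ℝ :=
  sSup { r : ℝ | ∃ I J : Finset (Fin d), I.Nonempty ∧ J.Nonempty ∧
    I.card + J.card = k + 1 ∧ r = subOpNorm U I J }

/-- The vector `W = (s₁, s₂ - s₁, …, s_d - s_{d-1})`. -/
noncomputable def Wvec {d : ℕ} (U : Matrix (Fin d) (Fin d) ℂ) : Fin d → ℝ :=
  fun k => sCoef U (k.val + 1) - (if k.val = 0 then 0 else sCoef U k.val)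

open Finset

/-!
Write `ρ = ∑ₘ vₘ vₘᴴ`. For a single vector `v` and index sets `I`, `J`, let `P` be the part of
`v` on the coordinates in `I` and `Q` its projection onto the span of the columns `U_j`, `j ∈ J`.
Then `∑_{i ∈ I} |vᵢ|² + ∑_{j ∈ J} |(Uᴴ v)ⱼ|² = re ⟪P + Q, v⟫`, while `‖P + Q‖²` exceeds
`‖P‖² + ‖Q‖²` by at most `2 t ‖P‖ ‖Q‖`, where `t` is the norm of the block `U_{IJ}`; this gives
`∑_{i ∈ I} pᵢ + ∑_{j ∈ J} qⱼ ≤ 1 + t`. Hence any `k + 1` entries of the concatenation `(p, q)` sum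
to at most `1 + s_{min k d}`, i.e. `(p, q)` is weakly majorized by `(1, W₁, …, W_d, 0, …, 0)`. As
`x ↦ x ^ α` is convex and increasing, `∑ pᵢ ^ α + ∑ qⱼ ^ α ≤ 1 + ∑ Wᵢ ^ α`, and AM–GM on the
two power sums gives the bound, the factor `1 / (1 - α)` being negative.
-/

lemma sum_mul_nonneg_of_antitone {c δ : ℕ → ℝ} {n : ℕ} (hc : Antitone c) (hc0 : ∀ i, 0 ≤ c i)
    (hδ : ∀ k ≤ n, 0 ≤ ∑ i ∈ range k, δ i) : 0 ≤ ∑ i ∈ range n, c i * δ i := by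
  -- Abel summation
  have abel : ∀ k ≤ n, c k * ∑ i ∈ range k, δ i ≤ ∑ i ∈ range k, c i * δ i := by
    intro k hk
    induction k with
    | zero => simp
    | succ k ih =>
      calc c (k + 1) * ∑ i ∈ range (k + 1), δ i
          ≤ c k * ∑ i ∈ range (k + 1), δ i :=
            mul_le_mul_of_nonneg_right (hc k.le_succ) (hδ (k + 1) hk)
        _ ≤ ∑ i ∈ range (k + 1), c i * δ i := by
            rw [sum_range_succ, sum_range_succ, mul_add]
            linarith [ih (by omega)]
  exact (mul_nonneg (hc0 n) (hδ n le_rfl)).trans (abel n le_rfl)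

lemma Real.mul_rpow_sub_one_mul_sub_le {a b α : ℝ} (ha : 0 ≤ a) (hb : 0 ≤ b) (hα : 1 ≤ α) :
    α * a ^ (α - 1) * (b - a) ≤ b ^ α - a ^ α := by
  rcases ha.eq_or_lt with rfl | ha
  · rcases hα.eq_or_lt with rfl | hα
    · simp
    · rw [Real.zero_rpow (by linarith), Real.zero_rpow (by linarith)]
      simpa using Real.rpow_nonneg hb α
  · have bernoulli := one_add_mul_self_le_rpow_one_add (s := b / a - 1) (by
      have := div_nonneg hb ha.le; linarith) hα
    rw [add_sub_cancel, Real.div_rpow hb ha.le, le_div_iff₀ (Real.rpow_pos_of_pos ha α)]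
      at bernoulli
    have : α * a ^ (α - 1) * (b - a) = (1 + α * (b / a - 1)) * a ^ α - a ^ α := by
      rw [Real.rpow_sub_one ha.ne']
      field_simp
      ring
    linarith

lemma sum_range_rpow_le_of_antitone {a b : ℕ → ℝ} {n : ℕ} {α : ℝ} (hα : 1 ≤ α)
    (ha : Antitone a) (ha0 : ∀ i, 0 ≤ a i) (hb0 : ∀ i, 0 ≤ b i)
    (hab : ∀ k ≤ n, ∑ i ∈ range k, a i ≤ ∑ i ∈ range k, b i) :
    ∑ i ∈ range n, a i ^ α ≤ ∑ i ∈ range n, b i ^ α := by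
  have tangent : ∑ i ∈ range n, α * a i ^ (α - 1) * (b i - a i)
      ≤ ∑ i ∈ range n, (b i ^ α - a i ^ α) :=
    sum_le_sum fun i _ => Real.mul_rpow_sub_one_mul_sub_le (ha0 i) (hb0 i) hα
  have abel : 0 ≤ ∑ i ∈ range n, α * a i ^ (α - 1) * (b i - a i) := by
    refine sum_mul_nonneg_of_antitone (fun i j hij => ?_) (fun i => ?_) (fun k hk => ?_)
    · exact mul_le_mul_of_nonneg_left
        (Real.rpow_le_rpow (ha0 j) (ha hij) (by linarith)) (by linarith)
    · exact mul_nonneg (by linarith) (Real.rpow_nonneg (ha0 i) _)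
    · rw [sum_sub_distrib, sub_nonneg]
      exact hab k hk
  rw [sum_sub_distrib] at tangent
  linarith

lemma exists_equiv_fin_antitone {ι α : Type*} [Fintype ι] [LinearOrder α] (x : ι → α) :
    ∃ e : Fin (Fintype.card ι) ≃ ι, Antitone (x ∘ e) := by
  let e₀ := (Fintype.equivFin ι).symm
  refine ⟨(Fin.revPerm.trans (Tuple.sort (x ∘ e₀))).trans e₀, fun i j hij => ?_⟩
  exact Tuple.monotone_sort (x ∘ e₀) (Fin.rev_le_rev.mpr hij)

theorem sum_rpow_le_of_forall_sum_le {ι : Type*} [Fintype ι] {x : ι → ℝ} {y : ℕ → ℝ} {α : ℝ}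
    (hα : 1 ≤ α) (hx : ∀ i, 0 ≤ x i) (hy : ∀ m, 0 ≤ y m)
    (hxy : ∀ s : Finset ι, ∑ i ∈ s, x i ≤ ∑ m ∈ range #s, y m) :
    ∑ i, x i ^ α ≤ ∑ m ∈ range (Fintype.card ι), y m ^ α := by
  obtain ⟨e, he⟩ := exists_equiv_fin_antitone x
  -- `a` is `x` sorted decreasingly and padded with zeros
  let a : ℕ → ℝ := fun m => if h : m < Fintype.card ι then x (e ⟨m, h⟩) else 0
  have ha0 : ∀ m, 0 ≤ a m := fun m => by
    unfold a; split_ifs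
    exacts [hx _, le_rfl]
  have ha : Antitone a := fun i j hij => by
    unfold a
    split_ifs with hj hi hi
    · exact he (Fin.mk_le_mk.mpr hij)
    · omega
    · exact hx _
    · exact le_rfl
  have hsum : ∀ (f : ℝ → ℝ) k (hk : k ≤ Fintype.card ι), ∑ m ∈ range k, f (a m) =
      ∑ i ∈ univ.map ((Fin.castLEEmb hk).trans e.toEmbedding), f (x i) := by
    intro f k hk
    rw [sum_map, ← Fin.sum_univ_eq_sum_range]
    refine sum_congr rfl fun i _ => ?_
    simp [a, show (i : ℕ) < Fintype.card ι by omega, Fin.castLE]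
  calc ∑ i, x i ^ α = ∑ m ∈ range (Fintype.card ι), a m ^ α := by
        rw [hsum (· ^ α) _ le_rfl, sum_map, ← e.sum_comp]
        refine sum_congr rfl fun i _ => ?_
        simp [Fin.castLE]
    _ ≤ ∑ m ∈ range (Fintype.card ι), y m ^ α := by
        refine sum_range_rpow_le_of_antitone hα ha ha0 hy fun k hk => ?_
        have := hxy (univ.map ((Fin.castLEEmb hk).trans e.toEmbedding))
        rw [card_map, card_univ, Fintype.card_fin] at this
        exact (hsum id k hk).trans_le this

-- The hypotheses on `P` and `Q` hold for the orthogonal projections of `v` onto two subspaces;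
-- `t` then bounds the cosine of the angle between them.
lemma norm_sq_add_norm_sq_le_of_re_inner {𝕜 E : Type*} [RCLike 𝕜] [NormedAddCommGroup E]
    [InnerProductSpace 𝕜 E] {v P Q : E} {t : ℝ} (ht : 0 ≤ t)
    (hP : RCLike.re (inner 𝕜 P v) = ‖P‖ ^ 2) (hQ : RCLike.re (inner 𝕜 Q v) = ‖Q‖ ^ 2)
    (hPQ : RCLike.re (inner 𝕜 P Q) ≤ t * (‖P‖ * ‖Q‖)) :
    ‖P‖ ^ 2 + ‖Q‖ ^ 2 ≤ (1 + t) * ‖v‖ ^ 2 := by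
  set m := ‖P‖ ^ 2 + ‖Q‖ ^ 2
  have hm : m ≤ ‖P + Q‖ * ‖v‖ := by
    calc m = RCLike.re (inner 𝕜 (P + Q) v) := by rw [inner_add_left, map_add, hP, hQ]
      _ ≤ ‖P + Q‖ * ‖v‖ := re_inner_le_norm (𝕜 := 𝕜) _ _
  have hPQ' : ‖P + Q‖ ^ 2 ≤ (1 + t) * m := by
    rw [norm_add_sq (𝕜 := 𝕜)]
    nlinarith [two_mul_le_add_sq ‖P‖ ‖Q‖]
  rcases (by positivity : 0 ≤ m).eq_or_lt with hm0 | hm0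
  · rw [← hm0]; positivity
  · refine le_of_mul_le_mul_left ?_ hm0
    nlinarith [mul_self_le_mul_self hm0.le hm, norm_nonneg v]

section Coordinates
variable {d : ℕ}

lemma EuclideanSpace.inner_toLp_mulVec_left (A : Matrix (Fin d) (Fin d) ℂ) (x y : Fin d → ℂ) :
    inner ℂ (WithLp.toLp 2 (A *ᵥ x) : EuclideanSpace ℂ (Fin d)) (WithLp.toLp 2 y) =
    inner ℂ (WithLp.toLp 2 x : EuclideanSpace ℂ (Fin d)) (WithLp.toLp 2 (Aᴴ *ᵥ y)) := by
  simp only [EuclideanSpace.inner_toLp_toLp]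
  rw [Matrix.star_mulVec, dotProduct_comm (Aᴴ *ᵥ y), Matrix.dotProduct_mulVec, dotProduct_comm]

lemma EuclideanSpace.norm_toLp_mulVec_of_mem_unitaryGroup {U : Matrix (Fin d) (Fin d) ℂ}
    (hU : U ∈ Matrix.unitaryGroup (Fin d) ℂ) (x : Fin d → ℂ) :
    ‖(WithLp.toLp 2 (U *ᵥ x) : EuclideanSpace ℂ (Fin d))‖ =
      ‖(WithLp.toLp 2 x : EuclideanSpace ℂ (Fin d))‖ := by
  rw [norm_eq_sqrt_re_inner (𝕜 := ℂ), norm_eq_sqrt_re_inner (𝕜 := ℂ),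
    EuclideanSpace.inner_toLp_mulVec_left, Matrix.mulVec_mulVec,
    show Uᴴ * U = 1 from hU.1, Matrix.one_mulVec]

lemma EuclideanSpace.inner_toLp_toLp_eq_sum (x y : Fin d → ℂ) :
    inner ℂ (WithLp.toLp 2 x : EuclideanSpace ℂ (Fin d)) (WithLp.toLp 2 y) =
      ∑ i, conj (x i) * y i := by
  simp [EuclideanSpace.inner_toLp_toLp, dotProduct, mul_comm]

end Coordinates

section SubOpNorm
variable {d : ℕ}

def blockForm (U : Matrix (Fin d) (Fin d) ℂ) (I J : Finset (Fin d)) (x y : Fin d → ℂ) : ℂ :=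
  ∑ i ∈ I, ∑ j ∈ J, conj (x i) * U i j * y j

lemma blockForm_ofReal_smul (U : Matrix (Fin d) (Fin d) ℂ) (I J : Finset (Fin d)) (r s : ℝ)
    (x y : Fin d → ℂ) :
    blockForm U I J ((r : ℂ) • x) ((s : ℂ) • y) = (r * s : ℂ) * blockForm U I J x y := by
  simp only [blockForm, mul_sum, Pi.smul_apply, smul_eq_mul, map_mul, Complex.conj_ofReal]
  refine sum_congr rfl fun i _ => sum_congr rfl fun j _ => by ring

lemma norm_toLp_indicator (I : Finset (Fin d)) (x : Fin d → ℂ) :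
    ‖(WithLp.toLp 2 ((I : Set (Fin d)).indicator x) : EuclideanSpace ℂ (Fin d))‖ =
      √(∑ i ∈ I, ‖x i‖ ^ 2) := by
  rw [EuclideanSpace.norm_eq]
  congr 1
  simp [Set.indicator_apply, apply_ite]

lemma re_inner_toLp_indicator (I : Finset (Fin d)) (x : Fin d → ℂ) :
    RCLike.re (inner ℂ (WithLp.toLp 2 ((I : Set (Fin d)).indicator x) : EuclideanSpace ℂ (Fin d))
      (WithLp.toLp 2 x)) = ∑ i ∈ I, ‖x i‖ ^ 2 := by
  simp [EuclideanSpace.inner_toLp_toLp_eq_sum, Set.indicator_apply, apply_ite, Complex.conj_mul',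
    ← Complex.ofReal_pow, sum_ite_mem]

lemma blockForm_eq_inner (U : Matrix (Fin d) (Fin d) ℂ) (I J : Finset (Fin d)) (x y : Fin d → ℂ) :
    blockForm U I J x y =
      inner ℂ (WithLp.toLp 2 ((I : Set (Fin d)).indicator x) : EuclideanSpace ℂ (Fin d))
      (WithLp.toLp 2 (U *ᵥ (J : Set (Fin d)).indicator y)) := by
  simp [EuclideanSpace.inner_toLp_toLp_eq_sum, blockForm, Set.indicator_apply, Matrix.mulVec,
    dotProduct,     apply_ite, mul_sum, mul_assoc]

lemma subOpNorm_eq_sSup (U : Matrix (Fin d) (Fin d) ℂ) (I J : Finset (Fin d)) :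
    subOpNorm U I J = sSup {r : ℝ | ∃ x y : Fin d → ℂ, ∑ i ∈ I, ‖x i‖ ^ 2 = 1 ∧
      ∑ j ∈ J, ‖y j‖ ^ 2 = 1 ∧ r = ‖blockForm U I J x y‖} := by
  rw [subOpNorm]
  congr 1
  ext r
  constructor
  · rintro ⟨x, y, hx, hy, rfl⟩
    let x' : Fin d → ℂ := fun i => if h : i ∈ I then x ⟨i, h⟩ else 0
    let y' : Fin d → ℂ := fun j => if h : j ∈ J then y ⟨j, h⟩ else 0
    refine ⟨x', y', ?_, ?_, ?_⟩
    · rw [← hx, ← sum_coe_sort I]; simp [x']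
    · rw [← hy, ← sum_coe_sort J]; simp [y']
    · rw [blockForm, ← sum_coe_sort I]
      simp_rw [← sum_coe_sort J]
      simp [x', y']
  · rintro ⟨x, y, hx, hy, rfl⟩
    refine ⟨fun i => x i, fun j => y j, ?_, ?_, ?_⟩
    · rwa [sum_coe_sort I (fun i => ‖x i‖ ^ 2)]
    · rwa [sum_coe_sort J (fun j => ‖y j‖ ^ 2)]
    · rw [blockForm, ← sum_coe_sort I]
      simp_rw [← sum_coe_sort J]

lemma subOpNorm_nonneg (U : Matrix (Fin d) (Fin d) ℂ) (I J : Finset (Fin d)) :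
    0 ≤ subOpNorm U I J :=
  Real.sSup_nonneg <| by rintro r ⟨x, y, -, -, rfl⟩; positivity

variable {U : Matrix (Fin d) (Fin d) ℂ} {I J : Finset (Fin d)}
  (hU : U ∈ Matrix.unitaryGroup (Fin d) ℂ)
include hU

lemma norm_blockForm_le (x y : Fin d → ℂ) :
    ‖blockForm U I J x y‖ ≤ √(∑ i ∈ I, ‖x i‖ ^ 2) * √(∑ j ∈ J, ‖y j‖ ^ 2) := by
  rw [blockForm_eq_inner, ← norm_toLp_indicator, ← norm_toLp_indicator,
    ← EuclideanSpace.norm_toLp_mulVec_of_mem_unitaryGroup hU ((J : Set (Fin d)).indicator y)]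
  exact norm_inner_le_norm (𝕜 := ℂ) (E := EuclideanSpace ℂ (Fin d)) _ _

lemma subOpNorm_le_one : subOpNorm U I J ≤ 1 := by
  rw [subOpNorm_eq_sSup]
  refine Real.sSup_le ?_ zero_le_one
  rintro r ⟨x, y, hx, hy, rfl⟩
  simpa [hx, hy] using norm_blockForm_le (I := I) (J := J) hU x y

lemma le_subOpNorm {x y : Fin d → ℂ} (hx : ∑ i ∈ I, ‖x i‖ ^ 2 = 1) (hy : ∑ j ∈ J, ‖y j‖ ^ 2 = 1) :
    ‖blockForm U I J x y‖ ≤ subOpNorm U I J := by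
  rw [subOpNorm_eq_sSup]
  refine le_csSup ⟨1, ?_⟩ ⟨x, y, hx, hy, rfl⟩
  rintro r ⟨x, y, hx, hy, rfl⟩
  simpa [hx, hy] using norm_blockForm_le (I := I) (J := J) hU x y

lemma norm_blockForm_le_subOpNorm_mul (x y : Fin d → ℂ) :
    ‖blockForm U I J x y‖ ≤ subOpNorm U I J * (√(∑ i ∈ I, ‖x i‖ ^ 2) * √(∑ j ∈ J, ‖y j‖ ^ 2)) := by
  have hCS := norm_blockForm_le (I := I) (J := J) hU x y
  obtain ha | ha := (Real.sqrt_nonneg (∑ i ∈ I, ‖x i‖ ^ 2)).eq_or_lt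
  · rw [← ha] at hCS ⊢; simpa using hCS
  obtain hb | hb := (Real.sqrt_nonneg (∑ j ∈ J, ‖y j‖ ^ 2)).eq_or_lt
  · rw [← hb] at hCS ⊢; simpa using hCS
  have unit : ∀ {K : Finset (Fin d)} (z : Fin d → ℂ), 0 < √(∑ k ∈ K, ‖z k‖ ^ 2) →
      ∑ k ∈ K, ‖((((√(∑ k ∈ K, ‖z k‖ ^ 2))⁻¹ : ℝ) : ℂ) • z) k‖ ^ 2 = 1 := by
    intro K z hz
    simp only [Pi.smul_apply, norm_smul, mul_pow, ← mul_sum, Complex.norm_real,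
      Real.norm_eq_abs, sq_abs, inv_pow]
    rw [Real.sq_sqrt (sum_nonneg fun _ _ => sq_nonneg _), inv_mul_cancel₀]
    rintro h0
    simp [h0] at hz
  have := le_subOpNorm hU (unit x ha) (unit y hb)
  rw [blockForm_ofReal_smul, norm_mul, ← Complex.ofReal_mul, Complex.norm_real,
    Real.norm_eq_abs, abs_of_pos (by positivity), ← mul_inv, inv_mul_le_iff₀ (by positivity)]
    at this
  linarith

lemma subOpNorm_mono {I' J' : Finset (Fin d)} (hI : I ⊆ I') (hJ : J ⊆ J') :
    subOpNorm U I J ≤ subOpNorm U I' J' := by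
  rw [subOpNorm_eq_sSup U I J]
  refine Real.sSup_le ?_ (subOpNorm_nonneg U I' J')
  rintro r ⟨x, y, hx, hy, rfl⟩
  have hsum : ∀ {K K' : Finset (Fin d)} (z : Fin d → ℂ), K ⊆ K' →
      ∑ k ∈ K', ‖(K : Set (Fin d)).indicator z k‖ ^ 2 = ∑ k ∈ K, ‖z k‖ ^ 2 := by
    intro K K' z hK
    simp [Set.indicator_apply, apply_ite, sum_ite_mem, inter_eq_right.mpr hK]
  have hform : blockForm U I J x y = blockForm U I' J' ((I : Set (Fin d)).indicator x)
      ((J : Set (Fin d)).indicator y) := by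
    rw [blockForm_eq_inner, blockForm_eq_inner, Set.indicator_indicator, Set.indicator_indicator,
      ← coe_inter, ← coe_inter, inter_eq_right.mpr hI, inter_eq_right.mpr hJ]
  rw [hform]
  exact le_subOpNorm hU ((hsum x hI).trans hx) ((hsum y hJ).trans hy)

lemma sum_norm_sq_add_sum_norm_sq_conjTranspose_mulVec_le (v : Fin d → ℂ) :
    ∑ i ∈ I, ‖v i‖ ^ 2 + ∑ j ∈ J, ‖(Uᴴ *ᵥ v) j‖ ^ 2 ≤ (1 + subOpNorm U I J) * ∑ i, ‖v i‖ ^ 2 := by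
  set u := Uᴴ *ᵥ v
  let P : EuclideanSpace ℂ (Fin d) := WithLp.toLp 2 ((I : Set (Fin d)).indicator v)
  let Q : EuclideanSpace ℂ (Fin d) := WithLp.toLp 2 (U *ᵥ (J : Set (Fin d)).indicator u)
  have hP : ‖P‖ ^ 2 = ∑ i ∈ I, ‖v i‖ ^ 2 := by
    rw [norm_toLp_indicator, Real.sq_sqrt (sum_nonneg fun _ _ => sq_nonneg _)]
  have hQ : ‖Q‖ ^ 2 = ∑ j ∈ J, ‖u j‖ ^ 2 := by
    rw [EuclideanSpace.norm_toLp_mulVec_of_mem_unitaryGroup hU, norm_toLp_indicator,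
      Real.sq_sqrt (sum_nonneg fun _ _ => sq_nonneg _)]
  have key := norm_sq_add_norm_sq_le_of_re_inner (v := WithLp.toLp 2 v) (P := P) (Q := Q)
    (subOpNorm_nonneg U I J) (by rw [hP]; exact re_inner_toLp_indicator I v)
    (by rw [hQ, EuclideanSpace.inner_toLp_mulVec_left]; exact re_inner_toLp_indicator J u) <| by
      rw [← blockForm_eq_inner, ← Real.sqrt_sq (norm_nonneg P), ← Real.sqrt_sq (norm_nonneg Q),
        hP, hQ]
      exact (Complex.re_le_norm _).trans (norm_blockForm_le_subOpNorm_mul hU v u)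
  rwa [hP, hQ, EuclideanSpace.norm_sq_eq] at key

end SubOpNorm

lemma Matrix.re_mul_conjTranspose_apply_self {n : Type*} [Fintype n] (A : Matrix n n ℂ) (i : n) :
    ((A * Aᴴ) i i).re = ∑ m, ‖A i m‖ ^ 2 := by
  simp [Matrix.mul_apply, Complex.mul_conj', ← Complex.ofReal_pow, Complex.re_sum]

lemma Matrix.re_trace {n : Type*} [Fintype n] (A : Matrix n n ℂ) :
    A.trace.re = ∑ i, (A i i).re := by
  simp [Matrix.trace, Complex.re_sum]

lemma Matrix.PosSemidef.re_diag_nonneg {n : Type*} {A : Matrix n n ℂ} (hA : A.PosSemidef)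
    (i : n) : 0 ≤ (A i i).re :=
  (Complex.le_def.mp hA.diag_nonneg).1

lemma Matrix.PosSemidef.exists_eq_mul_conjTranspose {n : Type*} [Fintype n] {ρ : Matrix n n ℂ}
    (hρ : ρ.PosSemidef) : ∃ B : Matrix n n ℂ, ρ = B * Bᴴ := by
  classical
  open scoped MatrixOrder in
  obtain ⟨C, rfl⟩ := CStarAlgebra.nonneg_iff_eq_star_mul_self.mp hρ.nonneg
  exact ⟨Cᴴ, by rw [Matrix.conjTranspose_conjTranspose]; rfl⟩

lemma sum_re_diag_add_sum_re_diag_conjTranspose_mul_mul_le {d : ℕ} {U : Matrix (Fin d) (Fin d) ℂ}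
    (hU : U ∈ Matrix.unitaryGroup (Fin d) ℂ) {ρ : Matrix (Fin d) (Fin d) ℂ} (hρ : ρ.PosSemidef)
    (I J : Finset (Fin d)) :
    ∑ i ∈ I, (ρ i i).re + ∑ j ∈ J, ((Uᴴ * ρ * U) j j).re ≤ (1 + subOpNorm U I J) * ρ.trace.re := by
  obtain ⟨B, rfl⟩ := hρ.exists_eq_mul_conjTranspose
  have hconj : Uᴴ * (B * Bᴴ) * U = (Uᴴ * B) * (Uᴴ * B)ᴴ := by
    simp [Matrix.conjTranspose_mul, Matrix.mul_assoc]
  have hcol : ∀ j m, (Uᴴ * B) j m = (Uᴴ *ᵥ Bᵀ m) j := fun _ _ => rfl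
  simp only [Matrix.re_trace, hconj, Matrix.re_mul_conjTranspose_apply_self, hcol]
  rw [sum_comm, sum_comm (s := J), ← sum_add_distrib, sum_comm, mul_sum]
  exact sum_le_sum fun m _ => sum_norm_sq_add_sum_norm_sq_conjTranspose_mulVec_le hU (Bᵀ m)

section SCoef
variable {d : ℕ}

lemma sCoef_nonneg (U : Matrix (Fin d) (Fin d) ℂ) (k : ℕ) : 0 ≤ sCoef U k :=
  Real.sSup_nonneg <| by rintro r ⟨I, J, -, -, -, rfl⟩; exact subOpNorm_nonneg U I J

lemma sCoef_zero (U : Matrix (Fin d) (Fin d) ℂ) : sCoef U 0 = 0 := by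
  rw [sCoef]
  convert Real.sSup_empty
  refine Set.eq_empty_of_forall_notMem ?_
  rintro r ⟨I, J, hI, hJ, hcard, -⟩
  have := hI.card_pos
  have := hJ.card_pos
  omega

variable {U : Matrix (Fin d) (Fin d) ℂ} (hU : U ∈ Matrix.unitaryGroup (Fin d) ℂ)
include hU

lemma subOpNorm_le_sCoef {I J : Finset (Fin d)} (hI : I.Nonempty) (hJ : J.Nonempty) {k : ℕ}
    (hcard : #I + #J = k + 1) : subOpNorm U I J ≤ sCoef U k :=
  le_csSup ⟨1, by rintro r ⟨I, J, -, -, -, rfl⟩; exact subOpNorm_le_one hU⟩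
    ⟨I, J, hI, hJ, hcard, rfl⟩

lemma sCoef_le_sCoef_succ {k : ℕ} (hk : k + 1 ≤ d) : sCoef U k ≤ sCoef U (k + 1) := by
  refine Real.sSup_le ?_ (sCoef_nonneg U _)
  rintro r ⟨I, J, hI, hJ, hcard, rfl⟩
  obtain ⟨a, ha⟩ : ∃ a, a ∉ I := by
    by_contra! h
    rw [eq_univ_of_forall h, card_univ, Fintype.card_fin] at hcard
    have := hJ.card_pos
    omega
  refine (subOpNorm_mono hU (subset_insert a I) subset_rfl).trans
    (subOpNorm_le_sCoef hU (insert_nonempty a I) hJ ?_)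
  rw [card_insert_of_notMem ha]
  omega

lemma one_le_sCoef_self (hd : 0 < d) : 1 ≤ sCoef U d := by
  let j₀ : Fin d := ⟨0, hd⟩
  have hcol : ∑ i, ‖U i j₀‖ ^ 2 = 1 := by
    have := Matrix.re_mul_conjTranspose_apply_self Uᴴ j₀
    rw [Matrix.conjTranspose_conjTranspose, show Uᴴ * U = 1 from hU.1] at this
    simpa [norm_star] using this.symm
  have hform : blockForm U univ {j₀} (fun i => U i j₀) 1 = 1 := by
    simp only [blockForm, sum_singleton, Pi.one_apply, mul_one, Complex.conj_mul']
    exact_mod_cast hcol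
  calc 1 = ‖blockForm U univ {j₀} (fun i => U i j₀) 1‖ := by rw [hform, norm_one]
    _ ≤ subOpNorm U univ {j₀} := le_subOpNorm hU hcol (by simp)
    _ ≤ sCoef U d := subOpNorm_le_sCoef hU ⟨j₀, mem_univ _⟩ (singleton_nonempty _) (by simp)

end SCoef

section Majorant
variable {d : ℕ}

-- The sequence `(1, W₁, …, W_d, 0, 0, …)`, written as the successive differences of
-- `0, 1 + s₀, 1 + s₁, …, 1 + s_d, 1 + s_d, …`.
noncomputable def majorant (U : Matrix (Fin d) (Fin d) ℂ) : ℕ → ℝ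
  | 0 => 1
  | m + 1 => sCoef U (min (m + 1) d) - sCoef U (min m d)

lemma sum_range_succ_majorant (U : Matrix (Fin d) (Fin d) ℂ) (k : ℕ) :
    ∑ m ∈ range (k + 1), majorant U m = 1 + sCoef U (min k d) := by
  rw [sum_range_succ', add_comm]
  simp only [majorant]
  rw [sum_range_sub (fun m => sCoef U (min m d)), Nat.zero_min, sCoef_zero, sub_zero]

lemma majorant_nonneg {U : Matrix (Fin d) (Fin d) ℂ} (hU : U ∈ Matrix.unitaryGroup (Fin d) ℂ) :
    ∀ m, 0 ≤ majorant U m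
  | 0 => zero_le_one
  | m + 1 => by
    rw [majorant, sub_nonneg]
    rcases lt_or_ge m d with h | h
    · rw [min_eq_left (Nat.succ_le_of_lt h), min_eq_left h.le]
      exact sCoef_le_sCoef_succ hU h
    · rw [min_eq_right h, min_eq_right (h.trans m.le_succ)]

lemma Wvec_eq_sub (U : Matrix (Fin d) (Fin d) ℂ) (k : Fin d) :
    Wvec U k = sCoef U (k + 1) - sCoef U k := by
  rw [Wvec]
  split_ifs with h
  · rw [h, sCoef_zero]
  · rfl

lemma sum_range_majorant_rpow (U : Matrix (Fin d) (Fin d) ℂ) (hd : 0 < d) {α : ℝ} (hα : α ≠ 0) :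
    ∑ m ∈ range (d + d), majorant U m ^ α = 1 + ∑ i, Wvec U i ^ α := by
  have htail : ∀ m ∈ range (d + d), m ∉ range (d + 1) → majorant U m ^ α = 0 := by
    intro m _ hm
    rw [mem_range, not_lt] at hm
    obtain ⟨k, rfl⟩ := Nat.exists_eq_add_one.mpr (by omega : 0 < m)
    rw [majorant, min_eq_right (by omega), min_eq_right (by omega), sub_self, Real.zero_rpow hα]
  rw [← sum_subset (range_subset_range.2 (by omega)) htail, sum_range_succ', majorant,
    Real.one_rpow, add_comm, ← Fin.sum_univ_eq_sum_range]
  congr 1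
  refine sum_congr rfl fun i _ => ?_
  rw [Wvec_eq_sub, majorant, min_eq_left (Nat.succ_le_of_lt i.isLt), min_eq_left i.isLt.le]

lemma sum_elim_le_sum_range_majorant {U : Matrix (Fin d) (Fin d) ℂ}
    (hU : U ∈ Matrix.unitaryGroup (Fin d) ℂ) (hd : 0 < d)
    {p q : Fin d → ℝ} (hp0 : ∀ i, 0 ≤ p i) (hq0 : ∀ j, 0 ≤ q j)
    (hp1 : ∑ i, p i = 1) (hq1 : ∑ j, q j = 1)
    (hpq : ∀ A B : Finset (Fin d), A.Nonempty → B.Nonempty →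
      ∑ i ∈ A, p i + ∑ j ∈ B, q j ≤ 1 + subOpNorm U A B)
    (S : Finset (Fin d ⊕ Fin d)) : ∑ x ∈ S, Sum.elim p q x ≤ ∑ m ∈ range #S, majorant U m := by
  rcases (#S).eq_zero_or_pos with hS | hS
  · simp [card_eq_zero.mp hS]
  obtain ⟨k, hk⟩ := Nat.exists_eq_add_one.mpr hS
  rw [hk, sum_range_succ_majorant, sum_sum_eq_sum_toLeft_add_sum_toRight]
  simp only [Sum.elim_inl, Sum.elim_inr]
  have hA1 : ∑ i ∈ S.toLeft, p i ≤ 1 := hp1 ▸ sum_le_univ_sum_of_nonneg hp0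
  have hB1 : ∑ j ∈ S.toRight, q j ≤ 1 := hq1 ▸ sum_le_univ_sum_of_nonneg hq0
  rcases le_or_gt k d with hkd | hkd
  · rw [min_eq_left hkd]
    rcases S.toLeft.eq_empty_or_nonempty with hA | hA
    · rw [hA, sum_empty]
      linarith [sCoef_nonneg U k]
    rcases S.toRight.eq_empty_or_nonempty with hB | hB
    · rw [hB, sum_empty]
      linarith [sCoef_nonneg U k]
    refine (hpq _ _ hA hB).trans ((add_le_add_iff_left 1).mpr (subOpNorm_le_sCoef hU hA hB ?_))
    rw [card_toLeft_add_card_toRight, hk]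
  · rw [min_eq_right hkd.le]
    linarith [one_le_sCoef_self hU hd]

end Majorant

lemma sum_rpow_pos_of_sum_eq_one {ι : Type*} [Fintype ι] {p : ι → ℝ} (hp0 : ∀ i, 0 ≤ p i)
    (hp1 : ∑ i, p i = 1) (α : ℝ) : 0 < ∑ i, p i ^ α := by
  obtain ⟨i, -, hi⟩ : ∃ i ∈ univ, 0 < p i :=
    exists_lt_of_sum_lt (by simp [hp1] : ∑ _i : ι, (0 : ℝ) < ∑ i, p i)
  exact sum_pos' (fun j _ => Real.rpow_nonneg (hp0 j) α) ⟨i, mem_univ i, Real.rpow_pos_of_pos hi α⟩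

lemma two_div_mul_log_le_renyiEntropy_add {ι κ : Type*} [Fintype ι] [Fintype κ] {α c : ℝ}
    (hα : 1 < α) {p : ι → ℝ} {q : κ → ℝ} (hp : 0 < ∑ i, p i ^ α) (hq : 0 < ∑ j, q j ^ α)
    (h : ∑ i, p i ^ α + ∑ j, q j ^ α ≤ c) :
    2 / (1 - α) * Real.log (c / 2) ≤ renyiEntropy α p + renyiEntropy α q := by
  have amgm : (∑ i, p i ^ α) * ∑ j, q j ^ α ≤ (c / 2) ^ 2 := by
    nlinarith [sq_nonneg (∑ i, p i ^ α - ∑ j, q j ^ α)]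
  have hlog : Real.log (∑ i, p i ^ α) + Real.log (∑ j, q j ^ α) ≤ 2 * Real.log (c / 2) := by
    rw [← Real.log_mul hp.ne' hq.ne', ← Real.log_rpow (by nlinarith), Real.rpow_two]
    exact Real.log_le_log (mul_pos hp hq) amgm
  calc 2 / (1 - α) * Real.log (c / 2) = 1 / (1 - α) * (2 * Real.log (c / 2)) := by ring
    _ ≤ 1 / (1 - α) * (Real.log (∑ i, p i ^ α) + Real.log (∑ j, q j ^ α)) :=
        mul_le_mul_of_nonpos_left hlog (by rw [one_div_nonpos]; linarith)
    _ = renyiEntropy α p + renyiEntropy α q := by rw [renyiEntropy, renyiEntropy, mul_add]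

theorem stmt_8_general (d : ℕ)
    (U : Matrix (Fin d) (Fin d) ℂ) (hU : U ∈ Matrix.unitaryGroup (Fin d) ℂ)
    (ρ : Matrix (Fin d) (Fin d) ℂ) (hρ : ρ.PosSemidef) (hρtr : ρ.trace = 1)
    (p q : Fin d → ℝ)
    (hp : ∀ i, p i = (ρ i i).re)
    (hq : ∀ j, q j = ((Uᴴ * ρ * U) j j).re)
    (α : ℝ) (hα : 1 < α) :
    renyiEntropy α p + renyiEntropy α q ≥
      (2 / (1 - α)) * Real.log ((1 + ∑ i, Wvec U i ^ α) / 2) := by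
  obtain rfl : p = fun i => (ρ i i).re := funext hp
  obtain rfl : q = fun j => ((Uᴴ * ρ * U) j j).re := funext hq
  have hp0 := hρ.re_diag_nonneg
  have hq0 := (hρ.conjTranspose_mul_mul_same U).re_diag_nonneg
  have hp1 : ∑ i, (ρ i i).re = 1 := by rw [← Matrix.re_trace, hρtr, Complex.one_re]
  have hq1 : ∑ j, ((Uᴴ * ρ * U) j j).re = 1 := by
    rw [← Matrix.re_trace, Matrix.trace_mul_cycle, show U * Uᴴ = 1 from hU.2, Matrix.one_mul, hρtr,
      Complex.one_re]
  have hd : 0 < d := Nat.pos_of_ne_zero <| by rintro rfl; simp at hp1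
  have hmaj := sum_elim_le_sum_range_majorant hU hd hp0 hq0 hp1 hq1 fun A B _ _ => by
    simpa [hρtr] using sum_re_diag_add_sum_re_diag_conjTranspose_mul_mul_le hU hρ A B
  have key := sum_rpow_le_of_forall_sum_le hα.le (Sum.forall.2 ⟨hp0, hq0⟩) (majorant_nonneg hU) hmaj
  rw [Fintype.sum_sum_type, Fintype.card_sum, Fintype.card_fin,
    sum_range_majorant_rpow U hd (by positivity)] at key
  exact two_div_mul_log_le_renyiEntropy_add hα (sum_rpow_pos_of_sum_eq_one hp0 hp1 α)
    (sum_rpow_pos_of_sum_eq_one hq0 hq1 α) key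

/-- For Rényi entropies of order `α > 1`:
`H_α(p) + H_α(q) ≥ (2/(1-α)) ln((1 + ∑ᵢ Wᵢ^α)/2)` with
`W = (s₁, s₂ - s₁, …, s_d - s_{d-1})`. -/
theorem stmt_8 (d : ℕ) (hd : 2 ≤ d)
    (U : Matrix (Fin d) (Fin d) ℂ) (hU : U ∈ Matrix.unitaryGroup (Fin d) ℂ)
    (ρ : Matrix (Fin d) (Fin d) ℂ) (hρ : ρ.PosSemidef) (hρtr : ρ.trace = 1)
    (p q : Fin d → ℝ)
    (hp : ∀ i, p i = (ρ i i).re)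
    (hq : ∀ j, q j = ((Uᴴ * ρ * U) j j).re)
    (α : ℝ) (hα : 1 < α) :
    renyiEntropy α p + renyiEntropy α q ≥
      (2 / (1 - α)) * Real.log ((1 + ∑ i, Wvec U i ^ α) / 2) :=
  stmt_8_general d U hU ρ hρ hρtr p q hp hq α hα
end

section
/- (Entropic uncertainty relation for several measurements) Let U^{(1)},…,U^{(L)} be d×d unitary matrices with columns u_i^{(j)}, let ψ ∈ ℂ^d be a unit vector, and set p_i^{(j)} = |⟨u_i^{(j)}, ψ⟩|². Then the sum of the Shannon entropies of the L probability vectors p^{(1)},…,p^{(L)} satisfies ∑_{j=1}^L H(p^{(j)}) ≥ −∑_{k=1}^{dL−1} (𝒮_k − 𝒮_{k−1}) ln(𝒮_k − 𝒮_{k−1}). -/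
open scoped BigOperators Matrix ComplexConjugate ComplexOrder

/-- The operator norm (largest singular value) of the `d × |S|` matrix whose columns are
the columns `u_i^{(j)}` of the unitaries `U j`, for `(i, j) ∈ S`. -/
noncomputable def colOpNorm {d L : ℕ} (U : Fin L → Matrix (Fin d) (Fin d) ℂ)
    (S : Finset (Fin d × Fin L)) : ℝ :=
  sSup { r : ℝ | ∃ (x : Fin d → ℂ) (y : S → ℂ),
    (∑ a, ‖x a‖ ^ 2 = 1) ∧ (∑ s, ‖y s‖ ^ 2 = 1) ∧
    r = ‖∑ a, ∑ s : S, (starRingEnd ℂ) (x a) * U s.1.2 a s.1.1 * y s‖ }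

/-- `multiS U k` is the coefficient `𝒮_k`: the maximal squared operator norm of a
`d × (k+1)` matrix formed by `k + 1` columns taken from the concatenation of the
unitaries `U j`. -/
noncomputable def multiS {d L : ℕ} (U : Fin L → Matrix (Fin d) (Fin d) ℂ) (k : ℕ) : ℝ :=
  (sSup { r : ℝ | ∃ S : Finset (Fin d × Fin L), S.card = k + 1 ∧ r = colOpNorm U S }) ^ 2

/-! Sort the `dL` numbers `p_i^{(j)} = |⟨u_i^{(j)}, ψ⟩|²` decreasingly. The `k + 1` largest of them
sum to `‖A_Sᴴ ψ‖² ≤ ‖A_S‖²` for the matrix `A_S` formed by the corresponding columns, hence to at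
most `𝒮_k`, while all of them sum to `L = 𝒮_{dL-1}`. So they are majorized by
`(𝒮₀, 𝒮₁ - 𝒮₀, …)`, and Schur concavity of the entropy (tangent lines of `t ↦ t log t` plus Abel
summation) bounds `∑ⱼ H(p^{(j)})` below by the entropy of that vector; its first term
`-𝒮₀ ln 𝒮₀` is nonnegative since `𝒮₀ ≤ 1`. -/

open Finset Matrix Real

theorem sum_mul_nonneg_of_monotoneOn_of_partial_sums_nonpos {n : ℕ} {c g : ℕ → ℝ}
    (hc : MonotoneOn c (Set.Iio n)) (hg : ∀ k ≤ n, ∑ i ∈ range k, g i ≤ 0)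
    (htot : ∑ i ∈ range n, g i = 0) :
    0 ≤ ∑ i ∈ range n, c i * g i := by
  have := sum_range_by_parts c g n
  simp only [smul_eq_mul, htot, mul_zero, zero_sub] at this
  rw [this, neg_nonneg]
  refine sum_nonpos fun i hi => mul_nonpos_of_nonneg_of_nonpos ?_ (hg _ ?_) <;>
    rw [mem_range] at hi
  · exact sub_nonneg.2 (hc (Set.mem_Iio.2 (by omega)) (Set.mem_Iio.2 (by omega)) i.le_succ)
  · omega

theorem log_add_one_mul_sub_le_mul_log_sub_mul_log {a b : ℝ} (ha : 0 < a) (hb : 0 ≤ b) :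
    (log a + 1) * (b - a) ≤ b * log b - a * log a := by
  rcases hb.eq_or_lt with rfl | hb
  · nlinarith [log_le_sub_one_of_pos ha]
  · have h : b * (log a - log b) ≤ a - b := by
      have := log_le_sub_one_of_pos (div_pos ha hb)
      rw [log_div ha.ne' hb.ne'] at this
      calc _ ≤ b * (a / b - 1) := by gcongr
        _ = a - b := by field_simp
    linarith

theorem neg_sum_mul_log_le_of_majorized {n : ℕ} {x q : ℕ → ℝ}
    (hx : ∀ i < n, 0 ≤ x i) (hq : ∀ i < n, 0 ≤ q i) (hanti : AntitoneOn x (Set.Iio n))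
    (hmaj : ∀ k ≤ n, ∑ i ∈ range k, x i ≤ ∑ i ∈ range k, q i)
    (htot : ∑ i ∈ range n, x i = ∑ i ∈ range n, q i) :
    -∑ i ∈ range n, q i * log (q i) ≤ -∑ i ∈ range n, x i * log (x i) := by
  set C := ∑ i ∈ range n, (|log (x i) + 1| + |log (q i)|)
  have hC : ∀ i < n, |log (x i) + 1| + |log (q i)| ≤ C := fun i hi =>
    single_le_sum (f := fun j => |log (x j) + 1| + |log (q j)|) (fun j _ => by positivity)
      (mem_range.2 hi)
  have hCx : ∀ i < n, -(log (x i) + 1) ≤ C := fun i hi => by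
    linarith [hC i hi, neg_le_abs (log (x i) + 1), abs_nonneg (log (q i))]
  have hCq : ∀ i < n, -log (q i) ≤ C := fun i hi => by
    linarith [hC i hi, neg_le_abs (log (q i)), abs_nonneg (log (x i) + 1)]
  -- `c i` is the slope of `t ↦ -t log t` at `x i`; where `x i = 0` that slope is `+∞`, and the
  -- finite `C`, which dominates every other slope that occurs, serves instead.
  set c : ℕ → ℝ := fun i => if x i = 0 then C else -(log (x i) + 1)
  have hterm : ∀ i < n, c i * (x i - q i) ≤ q i * log (q i) - x i * log (x i) := by
    intro i hi
    by_cases h0 : x i = 0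
    · simp only [c, if_pos h0, h0, zero_mul, sub_zero, zero_sub]
      nlinarith [mul_nonneg (hq i hi) (sub_nonneg.2 (hCq i hi))]
    · simp only [c, if_neg h0]
      linarith [log_add_one_mul_sub_le_mul_log_sub_mul_log ((hx i hi).lt_of_ne' h0) (hq i hi)]
  have hc : MonotoneOn c (Set.Iio n) := by
    intro i hi j hj hij
    by_cases hxj : x j = 0
    · simp only [c, if_pos hxj]
      split_ifs
      exacts [le_rfl, hCx i hi]
    · have hxj : 0 < x j := (hx j hj).lt_of_ne' hxj
      have hxji : x j ≤ x i := hanti hi hj hij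
      simp only [c, if_neg hxj.ne', if_neg (hxj.trans_le hxji).ne']
      linarith [log_le_log hxj hxji]
  have habel := sum_mul_nonneg_of_monotoneOn_of_partial_sums_nonpos hc (g := x - q)
    (fun k hk => by simpa [sum_sub_distrib] using hmaj k hk) (by simp [sum_sub_distrib, htot])
  have := sum_le_sum fun i hi => hterm i (mem_range.1 hi)
  simp only [Pi.sub_apply, sum_sub_distrib] at habel this
  linarith

theorem exists_injOn_antitoneOn_comp {α β : Type*} [Fintype α] [Nonempty α] [LinearOrder β]
    (f : α → β) :
    ∃ g : ℕ → α, Set.InjOn g (Set.Iio (Fintype.card α)) ∧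
      AntitoneOn (f ∘ g) (Set.Iio (Fintype.card α)) := by
  classical
  set e := (Fintype.equivFin α).symm
  set σ := Tuple.sort (OrderDual.toDual ∘ f ∘ e)
  have hσ : Antitone (f ∘ e ∘ σ) := Tuple.monotone_sort (OrderDual.toDual ∘ f ∘ e)
  refine ⟨fun i => if h : i < Fintype.card α then e (σ ⟨i, h⟩) else Classical.arbitrary α,
    fun i hi j hj hij => ?_, fun i hi j hj hij => ?_⟩
  · simp only [Set.mem_Iio] at hi hj
    simp only [dif_pos hi, dif_pos hj, EmbeddingLike.apply_eq_iff_eq, Fin.mk.injEq] at hij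
    exact hij
  · simp only [Set.mem_Iio] at hi hj
    simpa only [Function.comp_apply, dif_pos hi, dif_pos hj] using hσ (Fin.mk_le_mk.2 hij)

theorem ofReal_sum_norm_sq_eq_star_dotProduct {𝕜 n : Type*} [RCLike 𝕜] [Fintype n] (v : n → 𝕜) :
    ((∑ i, ‖v i‖ ^ 2 : ℝ) : 𝕜) = star v ⬝ᵥ v := by
  simp [dotProduct, RCLike.conj_mul]

theorem sum_norm_sq_conjTranspose_mulVec {𝕜 n : Type*} [RCLike 𝕜] [Fintype n] [DecidableEq n]
    {U : Matrix n n 𝕜} (hU : U ∈ unitaryGroup n 𝕜) (x : n → 𝕜) :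
    ∑ i, ‖(Uᴴ *ᵥ x) i‖ ^ 2 = ∑ i, ‖x i‖ ^ 2 := by
  apply RCLike.ofReal_injective (K := 𝕜)
  rw [ofReal_sum_norm_sq_eq_star_dotProduct, ofReal_sum_norm_sq_eq_star_dotProduct, star_mulVec,
    conjTranspose_conjTranspose, ← dotProduct_mulVec, mulVec_mulVec,
    ← star_eq_conjTranspose, Unitary.mul_star_self_of_mem hU, one_mulVec]

theorem norm_sum_mul_le_sqrt_mul_sqrt {𝕜 ι : Type*} [RCLike 𝕜] (s : Finset ι) (a y : ι → 𝕜) :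
    ‖∑ i ∈ s, a i * y i‖ ≤ √(∑ i ∈ s, ‖a i‖ ^ 2) * √(∑ i ∈ s, ‖y i‖ ^ 2) :=
  calc ‖∑ i ∈ s, a i * y i‖ ≤ ∑ i ∈ s, ‖a i‖ * ‖y i‖ := by
        simpa only [norm_mul] using norm_sum_le s (fun i => a i * y i)
    _ ≤ _ := Real.sum_mul_le_sqrt_mul_sqrt s _ _

variable {d L : ℕ}

-- `colInner U x (i, j)` is the inner product `⟨u_i^{(j)}, x⟩`.
noncomputable def colInner (U : Fin L → Matrix (Fin d) (Fin d) ℂ) (x : Fin d → ℂ)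
    (t : Fin d × Fin L) : ℂ :=
  ((U t.2)ᴴ *ᵥ x) t.1

theorem sum_norm_colInner_sq {U : Fin L → Matrix (Fin d) (Fin d) ℂ}
    (hU : ∀ j, U j ∈ unitaryGroup (Fin d) ℂ) {x : Fin d → ℂ} (hx : ∑ a, ‖x a‖ ^ 2 = 1) :
    ∑ t, ‖colInner U x t‖ ^ 2 = L := by
  simp [Fintype.sum_prod_type_right, colInner, sum_norm_sq_conjTranspose_mulVec (hU _), hx]

theorem norm_colInner_sq_le_one {U : Fin L → Matrix (Fin d) (Fin d) ℂ}
    (hU : ∀ j, U j ∈ unitaryGroup (Fin d) ℂ) {x : Fin d → ℂ} (hx : ∑ a, ‖x a‖ ^ 2 = 1)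
    (t : Fin d × Fin L) : ‖colInner U x t‖ ^ 2 ≤ 1 := by
  rw [← hx, ← sum_norm_sq_conjTranspose_mulVec (hU t.2)]
  exact single_le_sum (f := fun i => ‖((U t.2)ᴴ *ᵥ x) i‖ ^ 2) (fun i _ => by positivity)
    (mem_univ t.1)

theorem sum_norm_colInner_sq_le_min {U : Fin L → Matrix (Fin d) (Fin d) ℂ}
    (hU : ∀ j, U j ∈ unitaryGroup (Fin d) ℂ) {x : Fin d → ℂ} (hx : ∑ a, ‖x a‖ ^ 2 = 1)
    (S : Finset (Fin d × Fin L)) : ∑ t ∈ S, ‖colInner U x t‖ ^ 2 ≤ min (#S : ℝ) L := by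
  refine le_min ?_ ?_
  · simpa using sum_le_sum fun t (_ : t ∈ S) => norm_colInner_sq_le_one hU hx t
  · rw [← sum_norm_colInner_sq hU hx]
    exact sum_le_sum_of_subset_of_nonneg (subset_univ S) fun t _ _ => by positivity

theorem sum_sum_conj_mul_mul_eq (U : Fin L → Matrix (Fin d) (Fin d) ℂ) (S : Finset (Fin d × Fin L))
    (x : Fin d → ℂ) (y : S → ℂ) :
    ∑ a, ∑ s : S, (starRingEnd ℂ) (x a) * U s.1.2 a s.1.1 * y s =
      ∑ s : S, (starRingEnd ℂ) (colInner U x s) * y s := by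
  simp only [colInner, mulVec, dotProduct, conjTranspose_apply, map_sum, map_mul,
    RCLike.star_def, Complex.conj_conj, sum_mul]
  rw [sum_comm]
  exact sum_congr rfl fun s _ => sum_congr rfl fun a _ => by ring

section colOpNorm

variable (U : Fin L → Matrix (Fin d) (Fin d) ℂ) (S : Finset (Fin d × Fin L))

theorem norm_sum_sum_conj_mul_mul_le {x : Fin d → ℂ} {y : S → ℂ} (hy : ∑ s, ‖y s‖ ^ 2 = 1) :
    ‖∑ a, ∑ s : S, (starRingEnd ℂ) (x a) * U s.1.2 a s.1.1 * y s‖ ≤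
      √(∑ t ∈ S, ‖colInner U x t‖ ^ 2) := by
  rw [sum_sum_conj_mul_mul_eq]
  have := norm_sum_mul_le_sqrt_mul_sqrt univ (fun s : S => (starRingEnd ℂ) (colInner U x s)) y
  simpa only [RCLike.norm_conj, hy, Real.sqrt_one, mul_one,
    sum_coe_sort S fun t => ‖colInner U x t‖ ^ 2] using this

theorem colOpNorm_nonneg : 0 ≤ colOpNorm U S :=
  Real.sSup_nonneg fun _ ⟨_, _, _, _, hr⟩ => hr ▸ norm_nonneg _

theorem colOpNorm_le_sqrt {c : ℝ}
    (h : ∀ x : Fin d → ℂ, ∑ a, ‖x a‖ ^ 2 = 1 → ∑ t ∈ S, ‖colInner U x t‖ ^ 2 ≤ c) :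
    colOpNorm U S ≤ √c := by
  refine Real.sSup_le ?_ (Real.sqrt_nonneg c)
  rintro r ⟨x, y, hx, hy, rfl⟩
  exact (norm_sum_sum_conj_mul_mul_le U S hy).trans (Real.sqrt_le_sqrt (h x hx))

variable {U}

theorem colOpNorm_le_sqrt_min (hU : ∀ j, U j ∈ unitaryGroup (Fin d) ℂ) :
    colOpNorm U S ≤ √(min (#S : ℝ) L) :=
  colOpNorm_le_sqrt U S fun _ hx => sum_norm_colInner_sq_le_min hU hx S

-- Take `y` proportional to `(colInner U x s)_{s ∈ S}`, which makes Cauchy–Schwarz an equality.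
theorem sum_norm_colInner_sq_le_colOpNorm_sq (hU : ∀ j, U j ∈ unitaryGroup (Fin d) ℂ)
    {x : Fin d → ℂ} (hx : ∑ a, ‖x a‖ ^ 2 = 1) :
    ∑ t ∈ S, ‖colInner U x t‖ ^ 2 ≤ colOpNorm U S ^ 2 := by
  set P := ∑ t ∈ S, ‖colInner U x t‖ ^ 2
  rcases (show 0 ≤ P by positivity).eq_or_lt with hP | hP
  · exact hP ▸ sq_nonneg _
  have hbdd : BddAbove {r : ℝ | ∃ (x : Fin d → ℂ) (y : S → ℂ),
      (∑ a, ‖x a‖ ^ 2 = 1) ∧ (∑ s, ‖y s‖ ^ 2 = 1) ∧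
      r = ‖∑ a, ∑ s : S, (starRingEnd ℂ) (x a) * U s.1.2 a s.1.1 * y s‖} := by
    refine ⟨√L, ?_⟩
    rintro r ⟨x, y, hx, hy, rfl⟩
    exact (norm_sum_sum_conj_mul_mul_le U S hy).trans
      (Real.sqrt_le_sqrt ((sum_norm_colInner_sq_le_min hU hx S).trans (min_le_right _ _)))
  set y : S → ℂ := fun s => colInner U x s / (√P : ℝ)
  have hy : ∑ s, ‖y s‖ ^ 2 = 1 := by
    simp only [y, norm_div, Complex.norm_real, Real.norm_of_nonneg (Real.sqrt_nonneg P), div_pow,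
      Real.sq_sqrt hP.le, ← sum_div, sum_coe_sort S fun t => ‖colInner U x t‖ ^ 2]
    exact div_self hP.ne'
  have hval : ∑ s : S, (starRingEnd ℂ) (colInner U x s) * y s = (P : ℂ) / (√P : ℝ) := by
    simp only [y, mul_div_assoc', ← sum_div, Complex.conj_mul', P]
    push_cast
    exact congrArg (· / _) (sum_coe_sort S fun t => (‖colInner U x t‖ : ℂ) ^ 2)
  have : √P ≤ colOpNorm U S := le_csSup hbdd ⟨x, y, hx, hy, by
    rw [sum_sum_conj_mul_mul_eq, hval, norm_div, Complex.norm_real, Complex.norm_real,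
      Real.norm_of_nonneg hP.le, Real.norm_of_nonneg (Real.sqrt_nonneg P), Real.div_sqrt]⟩
  calc P = √P ^ 2 := (Real.sq_sqrt hP.le).symm
    _ ≤ colOpNorm U S ^ 2 := by gcongr

theorem colOpNorm_mono (hU : ∀ j, U j ∈ unitaryGroup (Fin d) ℂ) {S S' : Finset (Fin d × Fin L)}
    (h : S ⊆ S') : colOpNorm U S ≤ colOpNorm U S' := by
  rw [← Real.sqrt_sq (colOpNorm_nonneg U S')]
  refine colOpNorm_le_sqrt U S fun x hx => ?_
  exact (sum_le_sum_of_subset_of_nonneg h fun _ _ _ => by positivity).trans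
    (sum_norm_colInner_sq_le_colOpNorm_sq S' hU hx)

end colOpNorm

section multiS

variable {U : Fin L → Matrix (Fin d) (Fin d) ℂ}

theorem multiS_le_of_forall {k : ℕ} {c : ℝ} (hc : 0 ≤ c)
    (h : ∀ S : Finset (Fin d × Fin L), #S = k + 1 → colOpNorm U S ^ 2 ≤ c) :
    multiS U k ≤ c := by
  have hsup : sSup {r | ∃ S : Finset (Fin d × Fin L), #S = k + 1 ∧ r = colOpNorm U S} ≤ √c :=
    Real.sSup_le (by rintro _ ⟨S, hS, rfl⟩; exact Real.le_sqrt_of_sq_le (h S hS))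
      (Real.sqrt_nonneg c)
  have hsup₀ : 0 ≤ sSup {r | ∃ S : Finset (Fin d × Fin L), #S = k + 1 ∧ r = colOpNorm U S} :=
    Real.sSup_nonneg (by rintro _ ⟨S, -, rfl⟩; exact colOpNorm_nonneg U S)
  calc multiS U k ≤ √c ^ 2 := pow_le_pow_left₀ hsup₀ hsup 2
    _ = c := Real.sq_sqrt hc

theorem multiS_le_min (hU : ∀ j, U j ∈ unitaryGroup (Fin d) ℂ) (k : ℕ) :
    multiS U k ≤ min ((k : ℝ) + 1) L := by
  refine multiS_le_of_forall (by positivity) fun S hS => ?_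
  have := colOpNorm_le_sqrt_min S hU
  rw [hS, Nat.cast_succ] at this
  exact (Real.le_sqrt (colOpNorm_nonneg U S) (by positivity)).1 this

theorem colOpNorm_sq_le_multiS (hU : ∀ j, U j ∈ unitaryGroup (Fin d) ℂ)
    {S : Finset (Fin d × Fin L)} {k : ℕ} (hS : #S = k + 1) : colOpNorm U S ^ 2 ≤ multiS U k := by
  have hbdd : BddAbove {r | ∃ S : Finset (Fin d × Fin L), #S = k + 1 ∧ r = colOpNorm U S} :=
    ⟨√L, fun _ ⟨S, _, hr⟩ =>
      hr ▸ (colOpNorm_le_sqrt_min S hU).trans (Real.sqrt_le_sqrt (min_le_right _ _))⟩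
  exact pow_le_pow_left₀ (colOpNorm_nonneg U S) (le_csSup hbdd ⟨S, hS, rfl⟩) 2

theorem sum_norm_colInner_sq_le_multiS (hU : ∀ j, U j ∈ unitaryGroup (Fin d) ℂ)
    {x : Fin d → ℂ} (hx : ∑ a, ‖x a‖ ^ 2 = 1) {S : Finset (Fin d × Fin L)} {k : ℕ}
    (hS : #S = k + 1) : ∑ t ∈ S, ‖colInner U x t‖ ^ 2 ≤ multiS U k :=
  (sum_norm_colInner_sq_le_colOpNorm_sq S hU hx).trans (colOpNorm_sq_le_multiS hU hS)

theorem multiS_le_multiS_succ (hU : ∀ j, U j ∈ unitaryGroup (Fin d) ℂ) {k : ℕ}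
    (hk : k + 2 ≤ d * L) : multiS U k ≤ multiS U (k + 1) := by
  refine multiS_le_of_forall (sq_nonneg _) fun S hS => ?_
  obtain ⟨S', hSS', -, hS'⟩ := exists_subsuperset_card_eq (subset_univ S) (n := k + 2) (by omega)
    (by simpa using hk)
  exact (pow_le_pow_left₀ (colOpNorm_nonneg U S) (colOpNorm_mono hU hSS') 2).trans
    (colOpNorm_sq_le_multiS hU hS')

variable (U) in
-- `(𝒮₀, 𝒮₁ - 𝒮₀, 𝒮₂ - 𝒮₁, …)`: this vector majorizes the decreasingly sorted `p_i^{(j)}`.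
noncomputable def multiSIncrement : ℕ → ℝ
  | 0 => multiS U 0
  | k + 1 => multiS U (k + 1) - multiS U k

theorem sum_range_succ_multiSIncrement (k : ℕ) :
    ∑ i ∈ range (k + 1), multiSIncrement U i = multiS U k := by
  induction k with
  | zero => simp [multiSIncrement]
  | succ k ih => rw [sum_range_succ, ih, multiSIncrement, add_sub_cancel]

theorem multiSIncrement_nonneg (hU : ∀ j, U j ∈ unitaryGroup (Fin d) ℂ) {i : ℕ}
    (hi : i < d * L) : 0 ≤ multiSIncrement U i := by
  cases i with
  | zero => exact sq_nonneg _
  | succ k => exact sub_nonneg.2 (multiS_le_multiS_succ hU hi)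

end multiS

theorem neg_sum_multiSIncrement_mul_log_le {U : Fin L → Matrix (Fin d) (Fin d) ℂ} (hd : 0 < d)
    (hL : 0 < L) (hU : ∀ j, U j ∈ unitaryGroup (Fin d) ℂ) {ψ : Fin d → ℂ}
    (hψ : ∑ a, ‖ψ a‖ ^ 2 = 1) :
    -∑ i ∈ range (d * L), multiSIncrement U i * log (multiSIncrement U i) ≤
      -∑ t, ‖colInner U ψ t‖ ^ 2 * log (‖colInner U ψ t‖ ^ 2) := by
  classical
  set P : Fin d × Fin L → ℝ := fun t => ‖colInner U ψ t‖ ^ 2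
  have : Nonempty (Fin d × Fin L) := ⟨(⟨0, hd⟩, ⟨0, hL⟩)⟩
  obtain ⟨g, hg, hanti⟩ := exists_injOn_antitoneOn_comp P
  simp only [Fintype.card_prod, Fintype.card_fin] at hg hanti
  have hinj : ∀ k ≤ d * L, Set.InjOn g (range k) := fun k hk =>
    hg.mono fun i hi => by simp only [coe_range, Set.mem_Iio] at hi ⊢; omega
  have hcard : ∀ k ≤ d * L, #((range k).image g) = k := fun k hk => by
    rw [card_image_of_injOn (hinj k hk), card_range]
  have hsum : ∀ F : Fin d × Fin L → ℝ, ∑ i ∈ range (d * L), F (g i) = ∑ t, F t := fun F => by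
    rw [← sum_image (hinj _ le_rfl),
      eq_univ_of_card ((range (d * L)).image g) (by simp [hcard _ le_rfl])]
  have hmaj : ∀ k ≤ d * L, ∑ i ∈ range k, P (g i) ≤ ∑ i ∈ range k, multiSIncrement U i := by
    rintro (_ | k) hk
    · simp
    rw [sum_range_succ_multiSIncrement, ← sum_image (hinj _ hk)]
    exact sum_norm_colInner_sq_le_multiS hU hψ (hcard _ hk)
  obtain ⟨m, hm⟩ : ∃ m, d * L = m + 1 := Nat.exists_eq_add_one.2 (Nat.mul_pos hd hL)
  have htot : ∑ i ∈ range (d * L), P (g i) = ∑ i ∈ range (d * L), multiSIncrement U i := by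
    refine le_antisymm (hmaj _ le_rfl) ?_
    rw [hsum P, sum_norm_colInner_sq hU hψ, hm, sum_range_succ_multiSIncrement]
    exact (multiS_le_min hU m).trans (min_le_right _ _)
  have := neg_sum_mul_log_le_of_majorized (x := P ∘ g) (fun _ _ => sq_nonneg _)
    (fun i hi => multiSIncrement_nonneg hU hi) hanti hmaj htot
  rwa [← hsum fun t => P t * log (P t)]

/-- **Entropic uncertainty relation for several measurements**: with
`p (i, j) = |⟨u_i^{(j)}, ψ⟩|²`, the sum of the `L` Shannon entropies satisfies
`∑ⱼ H(p^{(j)}) ≥ -∑_{k=1}^{dL-1} (𝒮_k - 𝒮_{k-1}) ln(𝒮_k - 𝒮_{k-1})`. -/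
theorem stmt_14 (d L : ℕ) (hd : 1 ≤ d) (hL : 1 ≤ L)
    (U : Fin L → Matrix (Fin d) (Fin d) ℂ)
    (hU : ∀ j, U j ∈ Matrix.unitaryGroup (Fin d) ℂ)
    (ψ : Fin d → ℂ) (hψ : ∑ a, ‖ψ a‖ ^ 2 = 1)
    (p : Fin d × Fin L → ℝ)
    (hp : ∀ i j, p (i, j) = ‖∑ a, (starRingEnd ℂ) (U j a i) * ψ a‖ ^ 2) :
    ∑ j, shannonEntropy (fun i => p (i, j)) ≥
      -∑ k ∈ Finset.range (d * L - 1),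
        (multiS U (k + 1) - multiS U k) * Real.log (multiS U (k + 1) - multiS U k) := by
  have hentropy : ∑ j, shannonEntropy (fun i => p (i, j)) = -∑ t, p t * log (p t) := by
    simp only [shannonEntropy, sum_neg_distrib, Fintype.sum_prod_type_right]
  obtain rfl : p = fun t => ‖colInner U ψ t‖ ^ 2 := funext fun t => hp t.1 t.2
  have key := neg_sum_multiSIncrement_mul_log_le hd hL hU hψ
  obtain ⟨m, hm⟩ : ∃ m, d * L = m + 1 := Nat.exists_eq_add_one.2 (Nat.mul_pos hd hL)
  rw [hm, sum_range_succ'] at key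
  have hfirst : multiSIncrement U 0 * log (multiSIncrement U 0) ≤ 0 :=
    mul_log_nonpos (multiSIncrement_nonneg hU (by omega))
      ((multiS_le_min hU 0).trans (by simp))
  rw [ge_iff_le, hentropy, hm, Nat.add_sub_cancel]
  simp only [multiSIncrement] at key hfirst
  linarith
end
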